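/- arXiv:2604.11428 — 2 statements merged into one kernel-verified Lean document; each statement's English description precedes it below -/
import Mathlib

section
/- With the extremal setup below, assume further that v₁v_n is the unique negative edge of Γ′ and that x_n ≤ x₁. Then, for all sufficiently large n, every vertex in N(v₁) \ (N(v_n) ∪ {v_n}) is adjacent in Γ′ to every vertex in N(v₁) ∩ N(v_n). -/
/-!
Suppose `u ∈ N(v₁) \ N(vₙ)` and `w ∈ N(v₁) ∩ N(vₙ)` are not adjacent. Adding the positive edge
`uw` keeps the graph unbalanced and creates no new `K₄⁻`: a `K₄⁻` through `uw` needs a negative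
edge, hence contains `vₙ`, which `u` misses. By maximality the index does not grow, so the Rayleigh
quotient of `x` gives `x_u x_w = 0`. A zero coordinate of a nonnegative eigenvector spreads to all
neighbours along a nonnegative row; this gives `x_{v₁} = 0`, then `x_{vₙ} = 0`, and so a vertex `k`
with `x_k > 0` is adjacent to neither `v₁` nor `vₙ`. Adding the edge `kv₁` leaves the Rayleigh
quotient of `x` at `λ₁`, so `x` is an eigenvector of the new matrix as well, and its
`v₁`-coordinate then reads `0 = x_k`.
-/

open Matrix

/-- A signed graph of order `n`: a real symmetric `n × n` matrix with zero diagonal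
whose off-diagonal entries lie in `{-1, 0, 1}`. -/
def IsSignedGraph {n : ℕ} (A : Matrix (Fin n) (Fin n) ℝ) : Prop :=
  A.IsSymm ∧ (∀ i, A i i = 0) ∧ ∀ i j, A i j = -1 ∨ A i j = 0 ∨ A i j = 1

/-- The index (largest eigenvalue) of a signed graph. -/
noncomputable def lambdaMax {n : ℕ} (A : Matrix (Fin n) (Fin n) ℝ) : ℝ :=
  sSup (spectrum ℝ A)

/-- The smallest eigenvalue of a signed graph. -/
noncomputable def lambdaMin {n : ℕ} (A : Matrix (Fin n) (Fin n) ℝ) : ℝ :=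
  sInf (spectrum ℝ A)

/-- The spectral radius of a signed graph. -/
noncomputable def rho {n : ℕ} (A : Matrix (Fin n) (Fin n) ℝ) : ℝ :=
  max (lambdaMax A) (-(lambdaMin A))

/-- There is a cycle, all of whose vertices lie in `s`, along whose edges
the product of the entries of `A` is negative. -/
def HasNegCycleOn {n : ℕ} (A : Matrix (Fin n) (Fin n) ℝ) (s : Set (Fin n)) : Prop :=
  ∃ m : ℕ, 3 ≤ m ∧ ∃ c : ℕ → Fin n,
    (∀ i < m, ∀ j < m, c i = c j → i = j) ∧ (∀ i < m, c i ∈ s) ∧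
    (∀ i < m, A (c i) (c ((i + 1) % m)) ≠ 0) ∧
    (∏ i ∈ Finset.range m, A (c i) (c ((i + 1) % m))) < 0

/-- A signed graph is unbalanced if it has a negative cycle. -/
def IsUnbalanced {n : ℕ} (A : Matrix (Fin n) (Fin n) ℝ) : Prop :=
  HasNegCycleOn A Set.univ

/-- An `m`-element set of pairwise adjacent vertices whose induced signed complete
subgraph is unbalanced. -/
def IsKmMinus {n : ℕ} (A : Matrix (Fin n) (Fin n) ℝ) (m : ℕ) (s : Finset (Fin n)) : Prop :=
  s.card = m ∧ (∀ i ∈ s, ∀ j ∈ s, i ≠ j → A i j ≠ 0) ∧ HasNegCycleOn A ↑s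

/-- A `K₄⁻` of a signed graph. -/
def IsK4Minus {n : ℕ} (A : Matrix (Fin n) (Fin n) ℝ) (s : Finset (Fin n)) : Prop :=
  IsKmMinus A 4 s

/-- A signed graph is `t𝒦₄⁻`-free if it contains fewer than `t` distinct `K₄⁻`'s. -/
def TK4Free {n : ℕ} (t : ℕ) (A : Matrix (Fin n) (Fin n) ℝ) : Prop :=
  {s : Finset (Fin n) | IsK4Minus A s}.ncard < t

/-- Switching isomorphism of signed graphs: `B = (PD) A (PD)ᵀ` for a permutation
matrix `P` and a `±1` diagonal matrix `D`. -/
def SwitchIso {n : ℕ} (A B : Matrix (Fin n) (Fin n) ℝ) : Prop :=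
  ∃ (σ : Equiv.Perm (Fin n)) (d : Fin n → ℝ), (∀ i, d i = 1 ∨ d i = -1) ∧
    B = (σ.permMatrix ℝ * Matrix.diagonal d) * A * (σ.permMatrix ℝ * Matrix.diagonal d)ᵀ

/-- The signed graph `Γ_{s,n}`: the vertices `0, …, n-2` are pairwise adjacent,
the last vertex `n-1` is adjacent exactly to `0, …, s`, and every edge is positive
except the single negative edge joining `n-1` and `0`. -/
noncomputable def GammaSN (s n : ℕ) : Matrix (Fin n) (Fin n) ℝ :=
  fun i j =>
    if i = j then 0
    else if i.val ≠ n - 1 ∧ j.val ≠ n - 1 then 1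
    else if min i.val j.val = 0 then -1
    else if min i.val j.val ≤ s then 1
    else 0

/-- The signed graph `Σ_{k,n}` with parameter `r`: vertex `0` is `u₁`, vertex `1` is `u₂`,
vertices `2, …, r+1` are `w₁, …, w_r`, vertices `r+2, …, r+k+1` are `q₁, …, q_k`, and
vertices `r+k+2, …, n-1` are `v₁, …, v_{n-2-r-k}`.  The only negative edge is `u₁u₂`. -/
noncomputable def SigmaKN (r k n : ℕ) : Matrix (Fin n) (Fin n) ℝ :=
  fun i j =>
    if i = j then 0
    else if min i.val j.val = 0 then (if max i.val j.val = 1 then -1 else 1)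
    else if min i.val j.val = 1 then (if max i.val j.val ≤ r + k + 1 then 1 else 0)
    else if max i.val j.val ≤ r + 1 then 1
    else if max i.val j.val ≤ r + k + 1 then 0
    else 1

open scoped MatrixOrder

namespace Matrix

variable {n : ℕ} {M : Matrix (Fin n) (Fin n) ℝ}

lemma algebraMap_sub_mulVec (c : ℝ) (x : Fin n → ℝ) :
    (algebraMap ℝ _ c - M) *ᵥ x = c • x - M *ᵥ x := by
  rw [sub_mulVec, Algebra.algebraMap_eq_smul_one, smul_mulVec, one_mulVec]

namespace IsHermitian

lemma posSemidef_algebraMap_lambdaMax_sub (hM : M.IsHermitian) :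
    (algebraMap ℝ _ (lambdaMax M) - M).PosSemidef :=
  le_algebraMap_of_spectrum_le (fun _ h ↦ le_csSup finite_real_spectrum.bddAbove h) hM

lemma dotProduct_mulVec_le_lambdaMax_mul (hM : M.IsHermitian) (x : Fin n → ℝ) :
    x ⬝ᵥ M *ᵥ x ≤ lambdaMax M * (x ⬝ᵥ x) := by
  have := hM.posSemidef_algebraMap_lambdaMax_sub.dotProduct_mulVec_nonneg x
  rw [algebraMap_sub_mulVec, dotProduct_sub, dotProduct_smul, smul_eq_mul] at this
  simpa using this

lemma mulVec_eq_lambdaMax_smul (hM : M.IsHermitian) {x : Fin n → ℝ}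
    (hx : x ⬝ᵥ M *ᵥ x = lambdaMax M * (x ⬝ᵥ x)) : M *ᵥ x = lambdaMax M • x := by
  have h := (hM.posSemidef_algebraMap_lambdaMax_sub.dotProduct_mulVec_zero_iff x).1 (by
    rw [algebraMap_sub_mulVec, dotProduct_sub, dotProduct_smul, smul_eq_mul]
    simp [hx])
  rw [algebraMap_sub_mulVec, sub_eq_zero] at h
  exact h.symm

end IsHermitian

end Matrix

section PosEdge

variable {n : ℕ} {A B : Matrix (Fin n) (Fin n) ℝ} {a b v : Fin n}

def addPosEdge (A : Matrix (Fin n) (Fin n) ℝ) (a b : Fin n) : Matrix (Fin n) (Fin n) ℝ :=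
  fun p q ↦ if s(p, q) = s(a, b) then 1 else A p q

lemma addPosEdge_apply_of_eq {p q : Fin n} (h : s(p, q) = s(a, b)) :
    addPosEdge A a b p q = 1 := if_pos h

lemma addPosEdge_apply_of_ne {p q : Fin n} (h : s(p, q) ≠ s(a, b)) :
    addPosEdge A a b p q = A p q := if_neg h

lemma addPosEdge_apply_of_ne_zero (hab : A a b = 0) (hba : A b a = 0) {p q : Fin n}
    (hpq : A p q ≠ 0) : addPosEdge A a b p q = A p q := by
  refine addPosEdge_apply_of_ne fun h ↦ hpq ?_
  rcases Sym2.eq_iff.1 h with ⟨rfl, rfl⟩ | ⟨rfl, rfl⟩ <;> assumption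

lemma addPosEdge_eq_add_single (hab : A a b = 0) (hba : A b a = 0) (hne : a ≠ b) :
    addPosEdge A a b = A + single a b 1 + single b a 1 := by
  ext p q
  by_cases h : s(p, q) = s(a, b)
  · rcases Sym2.eq_iff.1 h with ⟨rfl, rfl⟩ | ⟨rfl, rfl⟩ <;>
      simp [addPosEdge, hab, hba, hne, hne.symm]
  · rw [addPosEdge_apply_of_ne h]
    simp only [Sym2.eq_iff, not_or, not_and] at h
    simp only [Matrix.add_apply, single_apply]
    grind

lemma addPosEdge_mulVec (hab : A a b = 0) (hba : A b a = 0) (hne : a ≠ b) (x : Fin n → ℝ) :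
    addPosEdge A a b *ᵥ x = A *ᵥ x + Pi.single a (x b) + Pi.single b (x a) := by
  simp [addPosEdge_eq_add_single hab hba hne, add_mulVec, single_mulVec, Pi.single]

lemma dotProduct_addPosEdge_mulVec (hab : A a b = 0) (hba : A b a = 0) (hne : a ≠ b)
    (x : Fin n → ℝ) :
    x ⬝ᵥ addPosEdge A a b *ᵥ x = x ⬝ᵥ A *ᵥ x + 2 * (x a * x b) := by
  rw [addPosEdge_mulVec hab hba hne, dotProduct_add, dotProduct_add, dotProduct_single,
    dotProduct_single]
  ring

lemma Matrix.IsSymm.addPosEdge (hA : A.IsSymm) : (addPosEdge A a b).IsSymm := by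
  ext p q
  simp only [transpose_apply, _root_.addPosEdge, Sym2.eq_swap, hA.apply]

lemma IsSignedGraph.ne_of_ne_zero (hA : IsSignedGraph A) {p q : Fin n} (h : A p q ≠ 0) :
    p ≠ q := fun hpq ↦ h (hpq ▸ hA.2.1 p)

lemma IsSignedGraph.addPosEdge (hA : IsSignedGraph A) (hne : a ≠ b) :
    IsSignedGraph (addPosEdge A a b) := by
  obtain ⟨hsymm, hdiag, hentry⟩ := hA
  refine ⟨hsymm.addPosEdge, fun p ↦ ?_, fun p q ↦ ?_⟩
  · rw [addPosEdge_apply_of_ne fun h ↦ hne ?_]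
    · exact hdiag p
    · rcases Sym2.eq_iff.1 h with ⟨rfl, rfl⟩ | ⟨rfl, rfl⟩ <;> rfl
  · by_cases h : s(p, q) = s(a, b)
    · exact .inr (.inr (addPosEdge_apply_of_eq h))
    · exact addPosEdge_apply_of_ne h ▸ hentry p q

lemma HasNegCycleOn.exists_neg {s : Set (Fin n)} (h : HasNegCycleOn A s) :
    ∃ p ∈ s, ∃ q ∈ s, A p q < 0 := by
  obtain ⟨m, hm, c, -, hmem, -, hprod⟩ := h
  by_contra! hnonneg
  exact hprod.not_ge <| Finset.prod_nonneg fun i hi ↦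
    hnonneg _ (hmem i (Finset.mem_range.1 hi)) _ (hmem _ (Nat.mod_lt _ (by omega)))

lemma HasNegCycleOn.of_eq_of_ne_zero {s : Set (Fin n)} (h : HasNegCycleOn A s)
    (hAB : ∀ p ∈ s, ∀ q ∈ s, A p q ≠ 0 → B p q = A p q) : HasNegCycleOn B s := by
  obtain ⟨m, hm, c, hinj, hmem, hnz, hprod⟩ := h
  have hedge : ∀ i < m, B (c i) (c ((i + 1) % m)) = A (c i) (c ((i + 1) % m)) := fun i hi ↦
    hAB _ (hmem i hi) _ (hmem _ (Nat.mod_lt _ (by omega))) (hnz i hi)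
  refine ⟨m, hm, c, hinj, hmem, fun i hi ↦ hedge i hi ▸ hnz i hi, ?_⟩
  rwa [Finset.prod_congr rfl fun i hi ↦ hedge i (Finset.mem_range.1 hi)]

lemma IsUnbalanced.addPosEdge (h : IsUnbalanced A) (hab : A a b = 0) (hba : A b a = 0) :
    IsUnbalanced (addPosEdge A a b) :=
  HasNegCycleOn.of_eq_of_ne_zero h fun _ _ _ _ ↦ addPosEdge_apply_of_ne_zero hab hba

lemma IsKmMinus.of_addPosEdge {m : ℕ} {s : Finset (Fin n)}
    (hneg : ∀ p q, A p q < 0 → p = v ∨ q = v) (hav : a ≠ v) (hbv : b ≠ v) (ha : A a v = 0)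
    (h : IsKmMinus (addPosEdge A a b) m s) : IsKmMinus A m s := by
  obtain ⟨hcard, hadj, hcyc⟩ := h
  by_cases hab : a ∈ s ∧ b ∈ s
  · exfalso
    obtain ⟨p, hp, q, hq, hpq⟩ := hcyc.exists_neg
    have hv : v ∈ s := by
      by_cases hnew : s(p, q) = s(a, b)
      · exact absurd (addPosEdge_apply_of_eq hnew ▸ hpq) (by norm_num)
      · rw [addPosEdge_apply_of_ne hnew] at hpq
        rcases hneg p q hpq with rfl | rfl <;> assumption
    refine hadj a hab.1 v hv hav ?_
    rw [addPosEdge_apply_of_ne fun h ↦ ?_, ha]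
    rcases Sym2.eq_iff.1 h with ⟨-, h⟩ | ⟨-, h⟩
    exacts [hbv h.symm, hav h.symm]
  · have heq : ∀ p ∈ s, ∀ q ∈ s, addPosEdge A a b p q = A p q := by
      refine fun p hp q hq ↦ addPosEdge_apply_of_ne fun h ↦ hab ?_
      rcases Sym2.eq_iff.1 h with ⟨rfl, rfl⟩ | ⟨rfl, rfl⟩
      exacts [⟨hp, hq⟩, ⟨hq, hp⟩]
    refine ⟨hcard, fun p hp q hq hpq ↦ heq p hp q hq ▸ hadj p hp q hq hpq, ?_⟩
    exact hcyc.of_eq_of_ne_zero fun p hp q hq _ ↦ (heq p hp q hq).symm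

lemma TK4Free.addPosEdge {t : ℕ} (h : TK4Free t A)
    (hneg : ∀ p q, A p q < 0 → p = v ∨ q = v) (hav : a ≠ v) (hbv : b ≠ v) (ha : A a v = 0) :
    TK4Free t (addPosEdge A a b) :=
  (Set.ncard_le_ncard (fun _ hs ↦ IsKmMinus.of_addPosEdge hneg hav hbv ha hs)
    (Set.toFinite _)).trans_lt h

end PosEdge

section Extremal

variable {n : ℕ} {A : Matrix (Fin n) (Fin n) ℝ} {x : Fin n → ℝ} {a b v : Fin n}

lemma eq_zero_of_mulVec_eq_smul_of_ne_zero {μ : ℝ} (hx : ∀ i, 0 ≤ x i) (hAx : A *ᵥ x = μ • x)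
    {p q : Fin n} (hp : x p = 0) (hrow : ∀ r, 0 ≤ A p r ∨ x r = 0) (hpq : A p q ≠ 0) :
    x q = 0 := by
  have hsum : ∑ r, A p r * x r = 0 := by
    simpa [hp, mulVec, dotProduct] using congrFun hAx p
  have hterm : ∀ r ∈ Finset.univ, 0 ≤ A p r * x r := fun r _ ↦ by
    rcases hrow r with h | h
    · exact mul_nonneg h (hx r)
    · simp [h]
  exact (mul_eq_zero.1 ((Finset.sum_eq_zero_iff_of_nonneg hterm).1 hsum q
    (Finset.mem_univ q))).resolve_left hpq

lemma dotProduct_addPosEdge_mulVec_of_mulVec_eq (hab : A a b = 0) (hba : A b a = 0)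
    (hne : a ≠ b) (hAx : A *ᵥ x = lambdaMax A • x) :
    x ⬝ᵥ addPosEdge A a b *ᵥ x = lambdaMax A * (x ⬝ᵥ x) + 2 * (x a * x b) := by
  rw [dotProduct_addPosEdge_mulVec hab hba hne, hAx, dotProduct_smul, smul_eq_mul]

lemma mul_nonpos_of_lambdaMax_addPosEdge_le (hA : A.IsSymm) (hab : A a b = 0) (hne : a ≠ b)
    (hAx : A *ᵥ x = lambdaMax A • x) (hle : lambdaMax (addPosEdge A a b) ≤ lambdaMax A) :
    x a * x b ≤ 0 := by
  have hquad := dotProduct_addPosEdge_mulVec_of_mulVec_eq hab (hA.apply a b ▸ hab) hne hAx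
  have hB : (addPosEdge A a b).IsHermitian := hA.addPosEdge
  have hray := hB.dotProduct_mulVec_le_lambdaMax_mul x
  have hxx : 0 ≤ x ⬝ᵥ x := Fintype.sum_nonneg fun i ↦ mul_self_nonneg (x i)
  nlinarith [mul_le_mul_of_nonneg_right hle hxx]

lemma apply_eq_zero_of_lambdaMax_addPosEdge_le (hA : A.IsSymm) (hab : A a b = 0) (hne : a ≠ b)
    (hAx : A *ᵥ x = lambdaMax A • x) (hle : lambdaMax (addPosEdge A a b) ≤ lambdaMax A)
    (hb : x b = 0) : x a = 0 := by
  have hba : A b a = 0 := hA.apply a b ▸ hab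
  have hB : (addPosEdge A a b).IsHermitian := hA.addPosEdge
  have hquad := dotProduct_addPosEdge_mulVec_of_mulVec_eq hab hba hne hAx
  rw [hb, mul_zero, mul_zero, add_zero] at hquad
  have hxx : 0 ≤ x ⬝ᵥ x := Fintype.sum_nonneg fun i ↦ mul_self_nonneg (x i)
  -- `x` attains the Rayleigh bound for the new matrix, so it is again an eigenvector there
  have hBx := hB.mulVec_eq_lambdaMax_smul <| le_antisymm (hB.dotProduct_mulVec_le_lambdaMax_mul x)
    (hquad ▸ mul_le_mul_of_nonneg_right hle hxx)
  have hxb := congrFun hBx b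
  rw [addPosEdge_mulVec hab hba hne, hAx] at hxb
  simpa [hb, hne.symm] using hxb

def IsIndexExtremal (t : ℕ) (A : Matrix (Fin n) (Fin n) ℝ) : Prop :=
  IsSignedGraph A ∧ IsUnbalanced A ∧ TK4Free t A ∧
    ∀ B : Matrix (Fin n) (Fin n) ℝ,
      IsSignedGraph B → IsUnbalanced B → TK4Free t B → lambdaMax B ≤ lambdaMax A

lemma IsIndexExtremal.lambdaMax_addPosEdge_le {t : ℕ} (hA : IsIndexExtremal t A)
    (hneg : ∀ p q, A p q < 0 → p = v ∨ q = v) (hab : A a b = 0) (hne : a ≠ b) (hav : a ≠ v)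
    (hbv : b ≠ v) (ha : A a v = 0) : lambdaMax (addPosEdge A a b) ≤ lambdaMax A :=
  let ⟨hsg, hub, htf, hmax⟩ := hA
  hmax _ (hsg.addPosEdge hne) (hub.addPosEdge hab (hsg.1.apply a b ▸ hab))
    (htf.addPosEdge hneg hav hbv ha)

lemma IsIndexExtremal.eq_zero_of_apply_eq_zero {t : ℕ} {w : Fin n} (hA : IsIndexExtremal t A)
    (hneg : ∀ p q, A p q < 0 → p = v ∧ q = w ∨ p = w ∧ q = v) (hvw : v ≠ w)
    (hx : ∀ i, 0 ≤ x i) (hAx : A *ᵥ x = lambdaMax A • x) (hv : x v = 0) (hw : x w = 0) :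
    x = 0 := by
  have hsymm := hA.1.1
  have hrow (p q : Fin n) : 0 ≤ A p q ∨ x q = 0 := or_iff_not_imp_left.2 fun h ↦ by
    rcases hneg p q (not_le.1 h) with ⟨-, rfl⟩ | ⟨-, rfl⟩ <;> assumption
  ext k
  by_contra hk
  have hkv : A k v = 0 := by
    by_contra h
    exact hk (eq_zero_of_mulVec_eq_smul_of_ne_zero hx hAx hv (hrow v) (hsymm.apply v k ▸ h))
  have hkw : A k w = 0 := by
    by_contra h
    exact hk (eq_zero_of_mulVec_eq_smul_of_ne_zero hx hAx hw (hrow w) (hsymm.apply w k ▸ h))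
  have hkv' : k ≠ v := fun h ↦ hk (h ▸ hv)
  exact hk <| apply_eq_zero_of_lambdaMax_addPosEdge_le hsymm hkv hkv' hAx
    (hA.lambdaMax_addPosEdge_le (fun p q h ↦ (hneg p q h).symm.imp (·.1) (·.2)) hkv hkv'
      (fun h ↦ hk (h ▸ hw)) hvw hkw) hv

end Extremal

theorem extremal_private_joined_to_common (t : ℕ) :
    ∃ N : ℕ, ∀ n : ℕ, ∀ _hn : N + 4 ≤ n, t ≤ (n - 2).choose 2 →
      ∀ (A : Matrix (Fin n) (Fin n) ℝ) (x : Fin n → ℝ),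
        IsSignedGraph A → IsUnbalanced A → TK4Free t A →
        (∀ B : Matrix (Fin n) (Fin n) ℝ,
          IsSignedGraph B → IsUnbalanced B → TK4Free t B → lambdaMax B ≤ lambdaMax A) →
        (∀ i, 0 ≤ x i) → (∑ i, x i ^ 2) = 1 → A.mulVec x = lambdaMax A • x →
        let v1 : Fin n := ⟨0, by omega⟩
        let v2 : Fin n := ⟨1, by omega⟩
        let vn : Fin n := ⟨n - 1, by omega⟩
        A v1 vn < 0 →
        (∀ i j : Fin n, A i j < 0 → (i = v1 ∧ j = vn) ∨ (i = vn ∧ j = v1)) →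
        x vn ≤ x v1 →
        ∀ i : Fin n, A v1 i ≠ 0 → A vn i = 0 → i ≠ vn →
          ∀ j : Fin n, A v1 j ≠ 0 → A vn j ≠ 0 →
            A i j ≠ 0 := by
  refine ⟨0, ?_⟩
  intro n _ _ A x hsg hub htf hmax hx hxx hAx v1 _ vn hedge hneg hxvn u hu hun huvn w hw hwn
  have hA : IsIndexExtremal t A := ⟨hsg, hub, htf, hmax⟩
  have hsymm := hsg.1
  have hrow (p : Fin n) (hp1 : p ≠ v1) (hpn : p ≠ vn) (q : Fin n) : 0 ≤ A p q ∨ x q = 0 :=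
    .inl <| not_lt.1 fun h ↦ (hneg p q h).elim (hp1 ·.1) (hpn ·.1)
  by_contra! huw
  have hwu : u ≠ w := fun h ↦ hwn (h ▸ hun)
  have hxuw : x u * x w = 0 := le_antisymm
    (mul_nonpos_of_lambdaMax_addPosEdge_le hsymm huw hwu hAx <| hA.lambdaMax_addPosEdge_le
      (fun p q h ↦ (hneg p q h).symm.imp (·.1) (·.2)) huw hwu huvn
      (hsg.ne_of_ne_zero hwn).symm (hsymm.apply vn u ▸ hun))
    (mul_nonneg (hx u) (hx w))
  have hxv1 : x v1 = 0 := by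
    rcases mul_eq_zero.1 hxuw with h | h
    · exact eq_zero_of_mulVec_eq_smul_of_ne_zero hx hAx h
        (hrow u (hsg.ne_of_ne_zero hu).symm huvn) (hsymm.apply v1 u ▸ hu)
    · exact eq_zero_of_mulVec_eq_smul_of_ne_zero hx hAx h
        (hrow w (hsg.ne_of_ne_zero hw).symm (hsg.ne_of_ne_zero hwn).symm) (hsymm.apply v1 w ▸ hw)
  have hx0 := hA.eq_zero_of_apply_eq_zero hneg (hsg.ne_of_ne_zero hedge.ne) hx hAx hxv1
    (le_antisymm (hxv1 ▸ hxvn) (hx vn))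
  simp [hx0] at hxx
end

section
/- For all integers n ≥ 5 and 1 ≤ s ≤ n−2, the signed graph Γ_{s,n} is unbalanced and contains exactly binom(s,2) distinct K₄⁻'s; in particular, Γ_{s,n} is t𝒦₄⁻-free for every integer t ≥ binom(s,2)+1. -/
open Matrix

/-! The only negative edge of `Γ_{s,n}` is `v₁v_n`, and a negative cycle must use a negative
edge, so every `K₄⁻` contains `v₁` and `v_n`. Its two other vertices are neighbours of `v_n`
other than `v₁`, i.e. lie among `v₂, …, v_{s+1}`. Conversely, for any two of these the four
vertices are pairwise adjacent and `v₁ vᵢ v_n` is a negative triangle. So the `K₄⁻`'s correspond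
to the 2-subsets of `{v₂, …, v_{s+1}}`, and `v₁ v₂ v_n` shows that `Γ_{s,n}` is unbalanced.
With `n = m + 1`, the vertex `v₁` is `0 : Fin (m + 1)` and `v_n` is `Fin.last m`. -/

theorem Finset.ncard_setOf_subset_of_subset_union_card_eq {α : Type*} [DecidableEq α]
    {u I : Finset α} (h : Disjoint u I) (k : ℕ) :
    {q : Finset α | u ⊆ q ∧ q ⊆ u ∪ I ∧ q.card = u.card + k}.ncard = I.card.choose k := by
  have hset : {q : Finset α | u ⊆ q ∧ q ⊆ u ∪ I ∧ q.card = u.card + k} =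
      ((I.powersetCard k).image (u ∪ ·) : Set (Finset α)) := by
    ext q
    simp only [Set.mem_ofPred_eq, Finset.coe_image, Set.mem_image, Finset.mem_coe,
      Finset.mem_powersetCard]
    constructor
    · rintro ⟨huq, hqI, hcard⟩
      refine ⟨q \ u, ⟨?_, ?_⟩, Finset.union_sdiff_of_subset huq⟩
      · exact sdiff_le_iff.2 hqI
      · rw [Finset.card_sdiff_of_subset huq]; omega
    · rintro ⟨p, ⟨hpI, rfl⟩, rfl⟩
      exact ⟨Finset.subset_union_left, Finset.union_subset_union subset_rfl hpI,
        Finset.card_union_of_disjoint (h.mono_right hpI)⟩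
  have hinj : Set.InjOn (u ∪ ·) (I.powersetCard k : Set (Finset α)) := by
    intro p hp p' hp' hpp'
    rw [← Finset.union_sdiff_cancel_left (h.mono_right (Finset.mem_powersetCard.1 hp).1),
      ← Finset.union_sdiff_cancel_left (h.mono_right (Finset.mem_powersetCard.1 hp').1)]
    exact congrArg (· \ u) hpp'
  rw [hset, Set.ncard_coe_finset, Finset.card_image_of_injOn hinj, Finset.card_powersetCard]

theorem Fin.zero_ne_last_of_pos {m : ℕ} (hm : 0 < m) : (0 : Fin (m + 1)) ≠ Fin.last m :=
  fun h => hm.ne (by simpa using congrArg Fin.val h)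

section NegCycle

variable {n : ℕ} {A : Matrix (Fin n) (Fin n) ℝ}

theorem HasNegCycleOn.exists_neg_entry {S : Set (Fin n)} (h : HasNegCycleOn A S) :
    ∃ i ∈ S, ∃ j ∈ S, A i j < 0 := by
  obtain ⟨m, hm, c, -, hmem, -, hprod⟩ := h
  by_contra! hc
  refine hprod.not_ge (Finset.prod_nonneg fun i hi => ?_)
  have hi : i < m := Finset.mem_range.1 hi
  exact hc _ (hmem i hi) _ (hmem _ (Nat.mod_lt _ (by omega)))

theorem hasNegCycleOn_of_triangle {S : Set (Fin n)} {x y z : Fin n}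
    (hx : x ∈ S) (hy : y ∈ S) (hz : z ∈ S) (hxy : x ≠ y) (hyz : y ≠ z) (hxz : x ≠ z)
    (hneg : A x y * A y z * A z x < 0) : HasNegCycleOn A S := by
  obtain ⟨h12, h3⟩ := mul_ne_zero_iff.1 hneg.ne
  obtain ⟨h1, h2⟩ := mul_ne_zero_iff.1 h12
  refine ⟨3, le_rfl, fun i => if i = 0 then x else if i = 1 then y else z, ?_, ?_, ?_, ?_⟩
  · intro i hi j hj h
    interval_cases i <;> interval_cases j <;> simp_all [eq_comm]
  · intro i hi
    interval_cases i <;> simpa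
  · intro i hi
    interval_cases i <;> simpa
  · simpa [Finset.prod_range_succ] using hneg

variable {a b : Fin n}

theorem HasNegCycleOn.mem_of_forall_lt_zero_iff
    (hneg : ∀ i j, A i j < 0 ↔ s(i, j) = s(a, b)) {S : Set (Fin n)} (h : HasNegCycleOn A S) :
    a ∈ S ∧ b ∈ S := by
  obtain ⟨i, hi, j, hj, hij⟩ := h.exists_neg_entry
  rcases Sym2.eq_iff.1 ((hneg i j).1 hij) with ⟨rfl, rfl⟩ | ⟨rfl, rfl⟩
  exacts [⟨hi, hj⟩, ⟨hj, hi⟩]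

theorem hasNegCycleOn_of_forall_lt_zero_iff (hab : a ≠ b)
    (hneg : ∀ i j, A i j < 0 ↔ s(i, j) = s(a, b)) {S : Set (Fin n)} {x : Fin n}
    (ha : a ∈ S) (hb : b ∈ S) (hx : x ∈ S) (hxa : x ≠ a) (hxb : x ≠ b)
    (hadj_a : A a x ≠ 0) (hadj_b : A x b ≠ 0) : HasNegCycleOn A S := by
  have hpos_a : 0 < A a x :=
    hadj_a.symm.lt_of_le <| not_lt.1 fun h => hxb (Sym2.congr_right.1 ((hneg a x).1 h))
  have hpos_b : 0 < A x b :=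
    hadj_b.symm.lt_of_le <| not_lt.1 fun h => hxa (Sym2.congr_left.1 ((hneg x b).1 h))
  exact hasNegCycleOn_of_triangle ha hx hb hxa.symm hxb hab
    (mul_neg_of_pos_of_neg (mul_pos hpos_a hpos_b) ((hneg b a).2 Sym2.eq_swap))

end NegCycle

section GammaSN

variable {m s : ℕ}

theorem GammaSN_lt_zero_iff (hm : 0 < m) {i j : Fin (m + 1)} :
    GammaSN s (m + 1) i j < 0 ↔ s(i, j) = s(0, Fin.last m) := by
  simp only [GammaSN, Sym2.eq_iff, Fin.ext_iff, Fin.val_last, Nat.add_sub_cancel, Fin.val_zero]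
  split_ifs <;> norm_num only [false_iff, true_iff] <;> omega

theorem GammaSN_ne_zero_iff {i j : Fin (m + 1)} (hij : i ≠ j) :
    GammaSN s (m + 1) i j ≠ 0 ↔
      (i = Fin.last m → j.val ≤ s) ∧ (j = Fin.last m → i.val ≤ s) := by
  rw [Fin.ne_iff_vne] at hij
  simp only [GammaSN, Fin.ext_iff, Fin.val_last]
  split_ifs <;> norm_num <;> omega

theorem GammaSN_isClique_iff {q : Finset (Fin (m + 1))} (hq : Fin.last m ∈ q) :
    (∀ i ∈ q, ∀ j ∈ q, i ≠ j → GammaSN s (m + 1) i j ≠ 0) ↔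
      ∀ i ∈ q, i ≠ Fin.last m → i.val ≤ s := by
  constructor
  · intro h i hi hil
    exact ((GammaSN_ne_zero_iff hil).1 (h i hi _ hq hil)).2 rfl
  · intro h i hi j hj hij
    rw [GammaSN_ne_zero_iff hij]
    exact ⟨fun hil => h j hj fun hjl => hij (hil.trans hjl.symm),
      fun hjl => h i hi fun hil => hij (hil.trans hjl.symm)⟩

theorem isK4Minus_GammaSN_iff (hm : 0 < m) {q : Finset (Fin (m + 1))} :
    IsK4Minus (GammaSN s (m + 1)) q ↔
      q.card = 4 ∧ {0, Fin.last m} ⊆ q ∧ ∀ i ∈ q, i ≠ Fin.last m → i.val ≤ s := by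
  have hneg : ∀ i j, GammaSN s (m + 1) i j < 0 ↔ s(i, j) = s(0, Fin.last m) :=
    fun _ _ => GammaSN_lt_zero_iff hm
  simp only [IsK4Minus, IsKmMinus, Finset.insert_subset_iff, Finset.singleton_subset_iff]
  constructor
  · rintro ⟨hcard, hclique, hcycle⟩
    obtain ⟨h0, hl⟩ := hcycle.mem_of_forall_lt_zero_iff hneg
    exact ⟨hcard, ⟨h0, hl⟩, (GammaSN_isClique_iff hl).1 hclique⟩
  · rintro ⟨hcard, ⟨h0, hl⟩, hle⟩
    have hclique := (GammaSN_isClique_iff hl).2 hle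
    have hlt : ({0, Fin.last m} : Finset (Fin (m + 1))).card < q.card :=
      Finset.card_le_two.trans_lt (by omega)
    obtain ⟨x, hx, hx0l⟩ := Finset.exists_mem_notMem_of_card_lt_card hlt
    simp only [Finset.mem_insert, Finset.mem_singleton, not_or] at hx0l
    exact ⟨hcard, hclique, hasNegCycleOn_of_forall_lt_zero_iff (Fin.zero_ne_last_of_pos hm)
      hneg h0 hl hx hx0l.1 hx0l.2 (hclique 0 h0 x hx (Ne.symm hx0l.1)) (hclique x hx _ hl hx0l.2)⟩

theorem ncard_setOf_isK4Minus_GammaSN (hsm : s < m) :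
    {q | IsK4Minus (GammaSN s (m + 1)) q}.ncard = s.choose 2 := by
  set u : Finset (Fin (m + 1)) := {0, Fin.last m}
  set I : Finset (Fin (m + 1)) :=
    (Finset.Icc 1 s).attachFin fun k hk => by rw [Finset.mem_Icc] at hk; omega
  have hu : u.card = 2 := Finset.card_pair (Fin.zero_ne_last_of_pos (by omega))
  have hmem : ∀ i, i ∈ u ∪ I ↔ (i ≠ Fin.last m → i.val ≤ s) := by
    intro i
    simp only [u, I, Finset.mem_union, Finset.mem_insert, Finset.mem_singleton,
      Finset.mem_attachFin, Finset.mem_Icc, ne_eq, Fin.ext_iff, Fin.val_last, Fin.val_zero]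
    omega
  have hdisj : Disjoint u I := by
    refine Finset.disjoint_left.2 fun i hiu hiI => ?_
    simp only [u, I, Finset.mem_insert, Finset.mem_singleton, Finset.mem_attachFin,
      Finset.mem_Icc, Fin.ext_iff, Fin.val_last, Fin.val_zero] at hiu hiI
    omega
  have hset : {q | IsK4Minus (GammaSN s (m + 1)) q} =
      {q | u ⊆ q ∧ q ⊆ u ∪ I ∧ q.card = u.card + 2} := by
    ext q
    simp only [Set.mem_ofPred_eq, isK4Minus_GammaSN_iff (s := s) (by omega : 0 < m), hu,
      Finset.subset_iff (s₂ := u ∪ I), hmem]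
    tauto
  rw [hset, Finset.ncard_setOf_subset_of_subset_union_card_eq hdisj, Finset.card_attachFin,
    Nat.card_Icc, Nat.add_sub_cancel]

theorem isUnbalanced_GammaSN (hs : 1 ≤ s) (hsm : s < m) : IsUnbalanced (GammaSN s (m + 1)) := by
  have hm : 0 < m := by omega
  set x : Fin (m + 1) := ⟨1, by omega⟩
  have hx0 : x ≠ 0 := by simp [x, Fin.ext_iff]
  have hxl : x ≠ Fin.last m := by
    simp only [x, ne_eq, Fin.ext_iff, Fin.val_last]
    omega
  refine hasNegCycleOn_of_forall_lt_zero_iff (Fin.zero_ne_last_of_pos hm)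
    (fun _ _ => GammaSN_lt_zero_iff hm) trivial trivial trivial hx0 hxl ?_ ?_
  · exact (GammaSN_ne_zero_iff hx0.symm).2
      ⟨fun h => absurd h (Fin.zero_ne_last_of_pos hm), hxl.elim⟩
  · exact (GammaSN_ne_zero_iff hxl).2 ⟨hxl.elim, fun _ => hs⟩

end GammaSN

theorem GammaSN_unbalanced_K4minus_count_general (n s : ℕ) (hs1 : 1 ≤ s)
    (hs2 : s ≤ n - 2) :
    IsUnbalanced (GammaSN s n) ∧
      {q : Finset (Fin n) | IsK4Minus (GammaSN s n) q}.ncard = s.choose 2 ∧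
      ∀ t : ℕ, s.choose 2 + 1 ≤ t → TK4Free t (GammaSN s n) := by
  obtain ⟨m, rfl⟩ : ∃ m, n = m + 1 := ⟨n - 1, by omega⟩
  have hsm : s < m := by omega
  have hcount := ncard_setOf_isK4Minus_GammaSN hsm
  refine ⟨isUnbalanced_GammaSN hs1 hsm, hcount, fun t ht => ?_⟩
  rw [TK4Free, hcount]
  omega

theorem GammaSN_unbalanced_K4minus_count (n s : ℕ) (hn : 5 ≤ n) (hs1 : 1 ≤ s)
    (hs2 : s ≤ n - 2) :
    IsUnbalanced (GammaSN s n) ∧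
      {q : Finset (Fin n) | IsK4Minus (GammaSN s n) q}.ncard = s.choose 2 ∧
      ∀ t : ℕ, s.choose 2 + 1 ≤ t → TK4Free t (GammaSN s n) :=
  GammaSN_unbalanced_K4minus_count_general n s hs1 hs2
end
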